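/- Let p ≥ 3 be prime, a, b ∈ E_p with b ≠ 1, and let x₁ ∈ ℚ_p be a fixed point of g(u) = a(b²u² + 1)/(b² + u²) not lying in E_p. Then |x₁² + b²|_p = |b − 1|_p. -/

import Mathlib

/-!
Clearing the denominator, a fixed point `x` of `g` satisfies `a (b²x² + 1) = x (b² + x²)`,
which rearranges to `(x - a)(x² + b²) = a (b - 1)(b + 1)(x - 1)(x + 1)`. Comparing the cubic and
quadratic sides forces `|x| ≤ 1`; then `|a| = |b| = |b + 1| = 1` and `x ∉ E_p` give
`|x - 1| = |x - a| = 1`, so `|x² + b²| = |b - 1| |x + 1|`. Finally `|x + 1| < 1` is impossible: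
it would make `x² + b² ≡ 2`, a unit for odd `p`, while the right-hand side is not.
-/

theorem sub_mul_sq_add_sq_eq_of_mul_add_eq_mul_add {R : Type*} [CommRing R] {a b x : R}
    (hfix : a * (b ^ 2 * x ^ 2 + 1) = x * (b ^ 2 + x ^ 2)) :
    (x - a) * (x ^ 2 + b ^ 2) = a * (b - 1) * (b + 1) * ((x - 1) * (x + 1)) := by
  linear_combination -hfix

section Ultrametric

theorem IsUltrametricDist.norm_eq_of_norm_sub_lt {S : Type*} [SeminormedAddGroup S]
    [IsUltrametricDist S] {x y : S} (h : ‖x - y‖ < ‖y‖) : ‖x‖ = ‖y‖ := by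
  simpa [max_eq_right h.le] using norm_add_eq_max_of_norm_ne_norm h.ne

variable {K : Type*} [NormedField K] [IsUltrametricDist K]

open IsUltrametricDist

theorem norm_eq_one_of_norm_sub_one_lt_one {x : K} (h : ‖x - 1‖ < 1) : ‖x‖ = 1 := by
  simpa using norm_eq_of_norm_sub_lt (y := (1 : K)) (by simpa using h)

theorem norm_add_one_eq_one_of_norm_sub_one_lt_one (h2 : ‖(2 : K)‖ = 1) {x : K}
    (h : ‖x - 1‖ < 1) : ‖x + 1‖ = 1 := by
  rw [norm_eq_of_norm_sub_lt (y := (2 : K)) (by rwa [h2, show x + 1 - 2 = x - 1 by ring]), h2]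

theorem norm_le_one_of_mul_add_eq_mul_add {a b x : K} (ha : ‖a‖ ≤ 1) (hb : ‖b‖ ≤ 1)
    (hfix : a * (b ^ 2 * x ^ 2 + 1) = x * (b ^ 2 + x ^ 2)) : ‖x‖ ≤ 1 := by
  by_contra! hx
  have hb2 : ‖b ^ 2‖ ≤ 1 := by
    rw [norm_pow]; exact pow_le_one₀ (norm_nonneg b) hb
  have hx2 : 1 < ‖x‖ ^ 2 := one_lt_pow₀ hx two_ne_zero
  have hsum : ‖b ^ 2 + x ^ 2‖ = ‖x‖ ^ 2 := by
    rw [← norm_pow]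
    exact norm_eq_of_norm_sub_lt (by simpa [norm_pow] using hb2.trans_lt hx2)
  have hlhs : ‖a * (b ^ 2 * x ^ 2 + 1)‖ ≤ ‖x‖ ^ 2 :=
    calc ‖a * (b ^ 2 * x ^ 2 + 1)‖ ≤ ‖b ^ 2 * x ^ 2 + 1‖ := by
          rw [norm_mul]; exact mul_le_of_le_one_left (norm_nonneg _) ha
      _ ≤ max ‖b ^ 2 * x ^ 2‖ ‖(1 : K)‖ := norm_add_le_max _ _
      _ ≤ ‖x‖ ^ 2 := max_le (by simpa [norm_mul, norm_pow] using
            mul_le_of_le_one_left (by positivity) hb2) (by simpa using hx2.le)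
  rw [hfix, norm_mul, hsum] at hlhs
  nlinarith

theorem norm_sq_add_sq_eq_norm_sub_one (h2 : ‖(2 : K)‖ = 1) {a b x : K}
    (ha : ‖a - 1‖ < 1) (hb : ‖b - 1‖ < 1)
    (hfix : a * (b ^ 2 * x ^ 2 + 1) = x * (b ^ 2 + x ^ 2)) (hx : ¬ ‖x - 1‖ < 1) :
    ‖x ^ 2 + b ^ 2‖ = ‖b - 1‖ := by
  have hna := norm_eq_one_of_norm_sub_one_lt_one ha
  have hnb1 := norm_add_one_eq_one_of_norm_sub_one_lt_one h2 hb
  have hxle := norm_le_one_of_mul_add_eq_mul_add hna.le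
    (norm_eq_one_of_norm_sub_one_lt_one hb).le hfix
  have hxs1 : ‖x - 1‖ = 1 :=
    le_antisymm (by simpa [sub_eq_add_neg] using
      (norm_add_le_max x (-1)).trans (max_le hxle (by simp))) (not_lt.mp hx)
  have hxa : ‖x - a‖ = 1 := by
    rw [norm_eq_of_norm_sub_lt (y := x - 1) (by rwa [hxs1, show x - a - (x - 1) = -(a - 1) by ring,
      norm_neg]), hxs1]
  have hprod : ‖x ^ 2 + b ^ 2‖ = ‖b - 1‖ * ‖x + 1‖ := by
    simpa [norm_mul, hna, hnb1, hxa, hxs1] using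
      congrArg norm (sub_mul_sq_add_sq_eq_of_mul_add_eq_mul_add hfix)
  suffices hx1 : ‖x + 1‖ = 1 by rw [hprod, hx1, mul_one]
  refine le_antisymm ((norm_add_le_max x 1).trans (max_le hxle norm_one.le))
    (not_lt.mp fun hlt => ?_)
  have hunit : ‖x ^ 2 + b ^ 2‖ = 1 := by
    refine (norm_eq_of_norm_sub_lt (y := (2 : K)) ?_).trans h2
    rw [h2, show x ^ 2 + b ^ 2 - 2 = (x - 1) * (x + 1) + (b - 1) * (b + 1) by ring]
    refine (norm_add_le_max _ _).trans_lt (max_lt ?_ ?_)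
    · rwa [norm_mul, hxs1, one_mul]
    · rwa [norm_mul, hnb1, mul_one]
  have : ‖b - 1‖ * ‖x + 1‖ < 1 :=
    mul_lt_one_of_nonneg_of_lt_one_left (norm_nonneg _) hb hlt.le
  linarith

end Ultrametric

theorem Padic.norm_two_eq_one {p : ℕ} [Fact p.Prime] (hp : 3 ≤ p) : ‖(2 : ℚ_[p])‖ = 1 := by
  exact_mod_cast Padic.norm_natCast_eq_one_iff.mpr
    ((Nat.coprime_primes Fact.out Nat.prime_two).mpr (by omega))

theorem stmt10_general (p : ℕ) [Fact p.Prime] (hp : 3 ≤ p) (a b : ℚ_[p])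
    (ha : ‖a - 1‖ < 1) (hb : ‖b - 1‖ < 1) (x₁ : ℚ_[p])
    (hd : b ^ 2 + x₁ ^ 2 ≠ 0)
    (hfix1 : a * (b ^ 2 * x₁ ^ 2 + 1) / (b ^ 2 + x₁ ^ 2) = x₁)
    (hnotE : ¬ ‖x₁ - 1‖ < 1) :
    ‖x₁ ^ 2 + b ^ 2‖ = ‖b - 1‖ :=
  norm_sq_add_sq_eq_norm_sub_one (Padic.norm_two_eq_one hp) ha hb
    ((div_eq_iff hd).mp hfix1) hnotE

theorem stmt10 (p : ℕ) [Fact p.Prime] (hp : 3 ≤ p) (a b : ℚ_[p])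
    (ha : ‖a - 1‖ < 1) (hb : ‖b - 1‖ < 1) (hb1 : b ≠ 1) (x₁ : ℚ_[p])
    (hd : b ^ 2 + x₁ ^ 2 ≠ 0)
    (hfix1 : a * (b ^ 2 * x₁ ^ 2 + 1) / (b ^ 2 + x₁ ^ 2) = x₁)
    (hnotE : ¬ ‖x₁ - 1‖ < 1) :
    ‖x₁ ^ 2 + b ^ 2‖ = ‖b - 1‖ :=
  stmt10_general p hp a b ha hb x₁ hd hfix1 hnotE
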